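/- arXiv:2307.12135 — 2 statements merged into one kernel-verified Lean document; each statement's English description precedes it below -/
import Mathlib

section
/- Generalization of no-regret to approximate best response with multiplicative error: suppose for each t ∈ [T], h_t satisfies L(h_t, q_t) ≤ ε + (1+α)·min_{h*∈H} L(h*, q_t), and the adversary's sequence q_1,...,q_T satisfies max_{q*} Σ_t L(h_t, q*) − Σ_t L(h_t, q_t) ≤ εT + α·max_{q*} Σ_t L(h_t, q*). Then the uniform average h̄ of h_1,...,h_T (as a mixed strategy) satisfies (1−α)·max_{q*} L(h̄, q*) ≤ 2ε + (1+α)·OPT, where OPT = min_{h*∈H} max_{q*} L(h*, q*). -/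
/-!
Each round's approximate best response loses at most `ε + (1 + α) N` against `q_t`, where `N` is
the worst-case loss of any fixed comparator `h'`, so the learner's cumulative loss is at most
`T (ε + (1 + α) N)`. The adversary's regret bound turns this into `(1 - α) M ≤ T (2ε + (1 + α) N)`
for the best cumulative loss `M` in hindsight, and every column of the uniform mixture `h̄` loses
at most `M / T`.
-/

open Finset

theorem Finset.sum_mul_le_of_le_of_sum_eq_one {ι R : Type*} [Semiring R] [PartialOrder R]
    [IsOrderedRing R] (s : Finset ι) {w f : ι → R} {c : R} (hw0 : ∀ i ∈ s, 0 ≤ w i)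
    (hw1 : ∑ i ∈ s, w i = 1) (hf : ∀ i ∈ s, f i ≤ c) : ∑ i ∈ s, w i * f i ≤ c :=
  calc ∑ i ∈ s, w i * f i ≤ ∑ i ∈ s, w i * c :=
        sum_le_sum fun i hi => mul_le_mul_of_nonneg_left (hf i hi) (hw0 i hi)
    _ = c := by rw [← sum_mul, hw1, one_mul]

theorem sum_loss_le_of_approx_best_response {ι τ : Type*} [Fintype ι] [Fintype τ]
    {q ℓ : τ → ι → ℝ} {g : ι → ℝ} {ε α N : ℝ} (hq0 : ∀ t i, 0 ≤ q t i)
    (hq1 : ∀ t, ∑ i, q t i = 1) (hα : 0 ≤ 1 + α) (hg : ∀ i, g i ≤ N)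
    (hbr : ∀ t, ∑ i, q t i * ℓ t i ≤ ε + (1 + α) * ∑ i, q t i * g i) :
    ∑ t, ∑ i, q t i * ℓ t i ≤ Fintype.card τ * (ε + (1 + α) * N) := by
  have hround (t : τ) : ∑ i, q t i * ℓ t i ≤ ε + (1 + α) * N := by
    refine (hbr t).trans ?_
    gcongr
    exact univ.sum_mul_le_of_le_of_sum_eq_one (fun i _ => hq0 t i) (hq1 t) fun i _ => hg i
  simpa only [card_univ, nsmul_eq_mul] using sum_le_card_nsmul univ _ _ fun t _ => hround t

theorem approx_best_response_dynamics_general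
    (H : Type*) (k T : ℕ) (hT : 0 < T)
    (L : H → Fin k → ℝ)
    (ε α : ℝ) (hα : 0 < α) (hα2 : α < 1 / 2)
    (q : Fin T → Fin k → ℝ) (hq0 : ∀ t i, 0 ≤ q t i) (hq1 : ∀ t, ∑ i, q t i = 1)
    (h : Fin T → H)
    -- approximate best response of the learner at each round
    (hbr : ∀ t, ∀ h' : H,
      (∑ i, q t i * L (h t) i) ≤ ε + (1 + α) * ∑ i, q t i * L h' i)
    -- M is the best cumulative payoff of the adversary in hindsight
    (M : ℝ) (hM : IsGreatest (Set.range fun i : Fin k => ∑ t, L (h t) i) M)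
    -- adversary's regret bound with multiplicative error
    (hadv : M - (∑ t, ∑ i, q t i * L (h t) i) ≤ ε * T + α * M) :
    -- OPT is below `max_i L(h', i)` for every pure strategy `h'`, so it suffices to
    -- bound against each `h'` via its worst-case loss `N`.
    ∀ q' : Fin k → ℝ, (∀ i, 0 ≤ q' i) → (∑ i, q' i = 1) →
    ∀ h' : H, ∀ N : ℝ, IsGreatest (Set.range fun i : Fin k => L h' i) N →
      (1 - α) * (∑ i, q' i * ((1 / T : ℝ) * ∑ t, L (h t) i)) ≤ 2 * ε + (1 + α) * N := by
  intro q' hq'0 hq'1 h' N hN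
  have hTpos : (0 : ℝ) < T := by exact_mod_cast hT
  have hcum : ∑ t, ∑ i, q t i * L (h t) i ≤ T * (ε + (1 + α) * N) := by
    simpa using sum_loss_le_of_approx_best_response hq0 hq1 (by linarith)
      (fun i => hN.2 ⟨i, rfl⟩) fun t => hbr t h'
  have hmix : ∑ i, q' i * ((1 / T : ℝ) * ∑ t, L (h t) i) ≤ M / T :=
    univ.sum_mul_le_of_le_of_sum_eq_one (fun i _ => hq'0 i) hq'1 fun i _ => by
      rw [one_div_mul_eq_div]
      gcongr
      exact hM.2 ⟨i, rfl⟩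
  calc (1 - α) * ∑ i, q' i * ((1 / T : ℝ) * ∑ t, L (h t) i) ≤ (1 - α) * (M / T) := by
        gcongr
        linarith
    _ ≤ 2 * ε + (1 + α) * N := by
        rw [mul_div_assoc', div_le_iff₀ hTpos]
        linarith

/-- No-regret with approximate best responses and multiplicative error:
if each `h_t` is an `(ε, 1+α)`-approximate best response to `q_t`, and the adversary's
regret satisfies `M − Σ_t L(h_t,q_t) ≤ εT + αM` where `M = max_{q*} Σ_t L(h_t,q*)`,
then the uniform mixture `h̄` of `h_1,…,h_T` satisfies
`(1−α)·max_{q*} L(h̄,q*) ≤ 2ε + (1+α)·OPT`. -/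
theorem approx_best_response_dynamics
    (H : Type*) [Fintype H] [Nonempty H] (k T : ℕ) (hk : 0 < k) (hT : 0 < T)
    (L : H → Fin k → ℝ) (hL : ∀ h i, 0 ≤ L h i ∧ L h i ≤ 1)
    (ε α : ℝ) (hε : 0 < ε) (hα : 0 < α) (hα2 : α < 1 / 2)
    (q : Fin T → Fin k → ℝ) (hq0 : ∀ t i, 0 ≤ q t i) (hq1 : ∀ t, ∑ i, q t i = 1)
    (h : Fin T → H)
    -- approximate best response of the learner at each round
    (hbr : ∀ t, ∀ h' : H,
      (∑ i, q t i * L (h t) i) ≤ ε + (1 + α) * ∑ i, q t i * L h' i)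
    -- M is the best cumulative payoff of the adversary in hindsight
    (M : ℝ) (hM : IsGreatest (Set.range fun i : Fin k => ∑ t, L (h t) i) M)
    -- adversary's regret bound with multiplicative error
    (hadv : M - (∑ t, ∑ i, q t i * L (h t) i) ≤ ε * T + α * M) :
    -- OPT is below `max_i L(h', i)` for every pure strategy `h'`, so it suffices to
    -- bound against each `h'` via its worst-case loss `N`.
    ∀ q' : Fin k → ℝ, (∀ i, 0 ≤ q' i) → (∑ i, q' i = 1) →
    ∀ h' : H, ∀ N : ℝ, IsGreatest (Set.range fun i : Fin k => L h' i) N →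
      (1 - α) * (∑ i, q' i * ((1 / T : ℝ) * ∑ t, L (h t) i)) ≤ 2 * ε + (1 + α) * N :=
  approx_best_response_dynamics_general H k T hT L ε α hα hα2 q hq0 hq1 h hbr M hM hadv
end

section
/- ε-optimality of approximate equilibrium strategy transfers to every individual distribution: if p̄ ∈ Δ(H) satisfies max over 2-smooth mixtures P ∈ (Δ(D))₂ of L_P(p̄) ≤ OPT' + ε, where OPT' = min_{p ∈ Δ(H)} max_{P ∈ (Δ(D))₂} L_P(p), then there exists a subset D' ⊆ D of size at least |D|/2 such that for all D ∈ D', L_D(p̄) ≤ OPT' + ε; and furthermore OPT' ≤ min_{p ∈ Δ(H)} max_{D ∈ D} L_D(p). -/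
open Finset

/-! If more than half of the distributions were bad for `p̄`, the uniform mixture over the bad
ones would be 2-smooth and would give `p̄` loss above `OPT' + ε`. For the second claim, a
2-smooth mixture witnessing `OPT'` is in particular a mixture, and a mixture of the losses
`L_D(p)` is at most their maximum. -/

section

variable {ι : Type*}

theorem exists_le_of_le_sum_mul [Fintype ι] {P g : ι → ℝ} {c : ℝ} (hP0 : ∀ i, 0 ≤ P i)
    (hP1 : ∑ i, P i = 1) (hc : c ≤ ∑ i, P i * g i) : ∃ i, c ≤ g i := by
  have hne : (univ : Finset ι).Nonempty :=
    nonempty_of_sum_ne_zero (by rw [hP1]; exact one_ne_zero)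
  obtain ⟨i, -, hmax⟩ := univ.exists_max_image g hne
  refine ⟨i, hc.trans ?_⟩
  calc ∑ j, P j * g j ≤ ∑ j, P j * g i :=
        sum_le_sum fun j _ => mul_le_mul_of_nonneg_left (hmax j (mem_univ j)) (hP0 j)
    _ = g i := by rw [← sum_mul, hP1, one_mul]

open scoped Classical in
noncomputable def uniformWeights (B : Finset ι) (i : ι) : ℝ :=
  if i ∈ B then (#B : ℝ)⁻¹ else 0

theorem uniformWeights_nonneg (B : Finset ι) (i : ι) : 0 ≤ uniformWeights B i := by
  unfold uniformWeights
  split_ifs <;> positivity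

theorem uniformWeights_le_two_div [Fintype ι] (B : Finset ι) (hB : Fintype.card ι ≤ 2 * #B)
    (i : ι) :
    uniformWeights B i ≤ 2 / Fintype.card ι := by
  unfold uniformWeights
  split_ifs with hi
  · have hBpos : (0 : ℝ) < #B := by exact_mod_cast card_pos.2 ⟨i, hi⟩
    have hkpos : (0 : ℝ) < Fintype.card ι := by exact_mod_cast Fintype.card_pos_iff.2 ⟨i⟩
    rw [inv_le_iff_one_le_mul₀ hBpos, ← mul_div_right_comm, one_le_div hkpos]
    exact_mod_cast hB
  · positivity

theorem sum_uniformWeights_mul [Fintype ι] (B : Finset ι) (f : ι → ℝ) :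
    ∑ i, uniformWeights B i * f i = (∑ i ∈ B, f i) / #B := by
  classical
  simp only [uniformWeights, ite_mul, zero_mul, sum_ite_mem, univ_inter, ← mul_sum]
  exact inv_mul_eq_div _ _

theorem sum_uniformWeights [Fintype ι] {B : Finset ι} (hB : B.Nonempty) :
    ∑ i, uniformWeights B i = 1 := by
  simpa [hB.ne_empty] using sum_uniformWeights_mul B 1

theorem card_le_two_mul_card_filter_le_of_forall_smooth [Fintype ι] {f : ι → ℝ} {t : ℝ}
    (h : ∀ P : ι → ℝ, (∀ i, 0 ≤ P i ∧ P i ≤ 2 / Fintype.card ι) → ∑ i, P i = 1 →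
      ∑ i, P i * f i ≤ t) :
    Fintype.card ι ≤ 2 * #{i | f i ≤ t} := by
  by_contra! hfew
  set B : Finset ι := {i | ¬ f i ≤ t}
  have hB : Fintype.card ι ≤ 2 * #B := by
    have hsplit : #{i | f i ≤ t} + #B = Fintype.card ι := card_filter_add_card_filter_not _
    omega
  have hBne : B.Nonempty := card_pos.1 (by omega)
  have hlt : #B * t < ∑ i ∈ B, f i := by
    rw [← nsmul_eq_mul, ← sum_const]
    exact sum_lt_sum_of_nonempty hBne fun i hi => not_le.1 (mem_filter.1 hi).2
  refine (h (uniformWeights B) (fun i => ⟨uniformWeights_nonneg B i,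
    uniformWeights_le_two_div B hB i⟩) (sum_uniformWeights hBne)).not_gt ?_
  rw [sum_uniformWeights_mul, lt_div_iff₀ (by exact_mod_cast hBne.card_pos), mul_comm]
  exact hlt

end

theorem smooth_optimality_transfers_general
    (H : Type*) [Fintype H] (ι : Type*) [Fintype ι]
    (k : ℕ) (hk : Fintype.card ι = k)
    (L : H → ι → ℝ)
    (ε : ℝ)
    (pbar : H → ℝ)
    (OPT' : ℝ)
    -- `p̄` is `ε`-optimal against every 2-smooth mixture `P`
    (hopt : ∀ P : ι → ℝ, (∀ D, 0 ≤ P D ∧ P D ≤ 2 / k) → (∑ D, P D = 1) →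
      (∑ D, P D * ∑ h, pbar h * L h D) ≤ OPT' + ε)
    -- `OPT'` is a lower bound on the smooth worst case of every mixture `p`
    (hOPTle : ∀ p : H → ℝ, (∀ h, 0 ≤ p h) → (∑ h, p h = 1) →
      ∃ P : ι → ℝ, (∀ D, 0 ≤ P D ∧ P D ≤ 2 / k) ∧ (∑ D, P D = 1) ∧
        OPT' ≤ ∑ D, P D * ∑ h, p h * L h D) :
    (∃ D' : Finset ι, k ≤ 2 * D'.card ∧
      ∀ D ∈ D', (∑ h, pbar h * L h D) ≤ OPT' + ε) ∧
    (∀ p : H → ℝ, (∀ h, 0 ≤ p h) → (∑ h, p h = 1) →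
      ∃ D : ι, OPT' ≤ ∑ h, p h * L h D) := by
  subst hk
  refine ⟨⟨_, card_le_two_mul_card_filter_le_of_forall_smooth hopt,
    fun D hD => (mem_filter.1 hD).2⟩, fun p hp0 hp1 => ?_⟩
  obtain ⟨P, hP, hP1, hOPT⟩ := hOPTle p hp0 hp1
  exact exists_le_of_le_sum_mul (fun D => (hP D).1) hP1 hOPT

/-- If `p̄` is `ε`-optimal against all 2-smooth mixtures, i.e.
`L_P(p̄) ≤ OPT' + ε` for every 2-smooth `P`, where `OPT'` is the min over mixtures `p`
of the max over 2-smooth `P` of `L_P(p)` (here we use that `OPT' ≤ max_P L_P(p)` for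
every `p`, witnessed by a smooth `P`), then at least half the distributions `D` satisfy
`L_D(p̄) ≤ OPT' + ε`, and `OPT' ≤ min_p max_{D} L_D(p)`. -/
theorem smooth_optimality_transfers
    (H : Type*) [Fintype H] (ι : Type*) [Fintype ι]
    (k : ℕ) (hk : Fintype.card ι = k) (hk0 : 0 < k)
    (L : H → ι → ℝ) (hL : ∀ h D, 0 ≤ L h D ∧ L h D ≤ 1)
    (ε : ℝ) (hε : 0 ≤ ε)
    (pbar : H → ℝ) (hpbar0 : ∀ h, 0 ≤ pbar h) (hpbar1 : ∑ h, pbar h = 1)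
    (OPT' : ℝ)
    -- `p̄` is `ε`-optimal against every 2-smooth mixture `P`
    (hopt : ∀ P : ι → ℝ, (∀ D, 0 ≤ P D ∧ P D ≤ 2 / k) → (∑ D, P D = 1) →
      (∑ D, P D * ∑ h, pbar h * L h D) ≤ OPT' + ε)
    -- `OPT'` is a lower bound on the smooth worst case of every mixture `p`
    (hOPTle : ∀ p : H → ℝ, (∀ h, 0 ≤ p h) → (∑ h, p h = 1) →
      ∃ P : ι → ℝ, (∀ D, 0 ≤ P D ∧ P D ≤ 2 / k) ∧ (∑ D, P D = 1) ∧
        OPT' ≤ ∑ D, P D * ∑ h, p h * L h D) :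
    (∃ D' : Finset ι, k ≤ 2 * D'.card ∧
      ∀ D ∈ D', (∑ h, pbar h * L h D) ≤ OPT' + ε) ∧
    (∀ p : H → ℝ, (∀ h, 0 ≤ p h) → (∑ h, p h = 1) →
      ∃ D : ι, OPT' ≤ ∑ h, p h * L h D) :=
  smooth_optimality_transfers_general H ι k hk L ε pbar OPT' hopt hOPTle
end
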